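/- Let F and G be real Hilbert spaces, A : F → G a bounded linear operator, g ∈ G, ε > 0, and J : F → ℝ convex, lower semicontinuous, and coercive, strictly convex along ker A. Let D(λ) = inf_{f ∈ F} [ J(f) + λ(‖A f − g‖² − ε) ]. If λ̄ > 0 and λ̄' > 0 both maximize D over (0, ∞), then the corresponding unique minimizers of the Lagrangian coincide: f_{λ̄} = f_{λ̄'}. -/

import Mathlib

/-!
Averaging the Lagrangian in `λ` gives `L(·, (λ + λ')/2) = (L(·, λ) + L(·, λ'))/2`. Since
`‖A f - g‖²` is strongly convex in `A f`, `L(f, λ)` exceeds its minimum `D(λ)` by at least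
`λ ‖A f - A f_λ‖² / 2`; averaging, `D((λ + λ')/2) ≥ (D(λ) + D(λ'))/2 + c ‖A f_λ - A f_λ'‖²` with
`c > 0`. When both `λ` and `λ'` maximize `D` this forces `A f_λ = A f_λ'`. Then `f_λ` and `f_λ'`
have the same residual, hence the same value of `J`, and strict convexity of `J` along `ker A`
makes them equal.
-/

theorem norm_sub_sq_le_two_mul_add {E : Type*} [SeminormedAddCommGroup E] (x y z : E) :
    ‖x - z‖ ^ 2 ≤ 2 * (‖x - y‖ ^ 2 + ‖y - z‖ ^ 2) :=
  (pow_le_pow_left₀ (norm_nonneg _) (norm_sub_le_norm_sub_add_norm_sub x y z) 2).trans add_sq_le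

section Lagrangian

variable {F G : Type*} [NormedAddCommGroup F] [NormedSpace ℝ F]

theorem ConvexOn.map_two_inv_smul_add_le {J : F → ℝ} (hJ : ConvexOn ℝ Set.univ J) (f f' : F) :
    J ((2 : ℝ)⁻¹ • (f + f')) ≤ (J f + J f') / 2 := by
  have h := hJ.2 (Set.mem_univ f) (Set.mem_univ f') (by norm_num : (0 : ℝ) ≤ 2⁻¹)
    (by norm_num : (0 : ℝ) ≤ 2⁻¹) (by norm_num)
  rw [smul_add]
  simp only [smul_eq_mul] at h
  linarith

variable [NormedAddCommGroup G] [NormedSpace ℝ G]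

def lagrangian (J : F → ℝ) (A : F →L[ℝ] G) (g : G) (ε : ℝ) (f : F) (lam : ℝ) : ℝ :=
  J f + lam * (‖A f - g‖ ^ 2 - ε)

noncomputable def dual (J : F → ℝ) (A : F →L[ℝ] G) (g : G) (ε : ℝ) (lam : ℝ) : ℝ :=
  ⨅ f, lagrangian J A g ε f lam

variable {J : F → ℝ} {A : F →L[ℝ] G} {g : G} {ε : ℝ}

theorem dual_eq_lagrangian_of_forall_le {lam : ℝ} {f₀ : F}
    (h₀ : ∀ f, lagrangian J A g ε f₀ lam ≤ lagrangian J A g ε f lam) :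
    dual J A g ε lam = lagrangian J A g ε f₀ lam :=
  le_antisymm (ciInf_le ⟨_, Set.forall_mem_range.2 h₀⟩ f₀) (le_ciInf h₀)

theorem eq_of_forall_lagrangian_le_of_map_eq
    (hJ : ∀ f f' : F, f ≠ f' → A (f - f') = 0 → J ((2 : ℝ)⁻¹ • (f + f')) < (J f + J f') / 2)
    {lam lam' : ℝ} {f₀ f₁ : F}
    (h₀ : ∀ f, lagrangian J A g ε f₀ lam ≤ lagrangian J A g ε f lam)
    (h₁ : ∀ f, lagrangian J A g ε f₁ lam' ≤ lagrangian J A g ε f lam')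
    (hA : A f₀ = A f₁) :
    f₀ = f₁ := by
  by_contra hne
  have hJ₀₁ : J f₀ = J f₁ := by
    have h₀₁ := h₀ f₁
    have h₁₀ := h₁ f₀
    simp only [lagrangian, hA] at h₀₁ h₁₀
    linarith
  have hAmid : A ((2 : ℝ)⁻¹ • (f₀ + f₁)) = A f₀ := by
    rw [map_smul, map_add, hA, ← two_smul ℝ, smul_smul]
    norm_num
  have hmid := h₀ ((2 : ℝ)⁻¹ • (f₀ + f₁))
  have hstrict := hJ f₀ f₁ hne (by rw [map_sub, hA, sub_self])
  simp only [lagrangian, hAmid] at hmid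
  linarith

end Lagrangian

section InnerProduct

variable {G : Type*} [NormedAddCommGroup G] [InnerProductSpace ℝ G]

theorem norm_two_inv_smul_add_sq (x y : G) :
    ‖(2 : ℝ)⁻¹ • (x + y)‖ ^ 2 = (‖x‖ ^ 2 + ‖y‖ ^ 2) / 2 - ‖x - y‖ ^ 2 / 4 := by
  have h := parallelogram_law_with_norm ℝ x y
  rw [norm_smul, mul_pow]
  norm_num
  linarith

variable {F : Type*} [NormedAddCommGroup F] [NormedSpace ℝ F]
  {J : F → ℝ} {A : F →L[ℝ] G} {g : G} {ε : ℝ}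

theorem lagrangian_two_inv_smul_add_le (hJ : ConvexOn ℝ Set.univ J) (lam : ℝ) (f f' : F) :
    lagrangian J A g ε ((2 : ℝ)⁻¹ • (f + f')) lam + lam * ‖A f - A f'‖ ^ 2 / 4 ≤
      (lagrangian J A g ε f lam + lagrangian J A g ε f' lam) / 2 := by
  have hres : A ((2 : ℝ)⁻¹ • (f + f')) - g = (2 : ℝ)⁻¹ • ((A f - g) + (A f' - g)) := by
    simp only [map_smul, map_add]
    module
  have hnorm := norm_two_inv_smul_add_sq (A f - g) (A f' - g)
  rw [sub_sub_sub_cancel_right] at hnorm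
  have hJmid := hJ.map_two_inv_smul_add_le f f'
  simp only [lagrangian, hres, hnorm]
  nlinarith

theorem lagrangian_add_le_of_forall_le (hJ : ConvexOn ℝ Set.univ J) {lam : ℝ} {f₀ : F}
    (h₀ : ∀ f, lagrangian J A g ε f₀ lam ≤ lagrangian J A g ε f lam) (f : F) :
    lagrangian J A g ε f₀ lam + lam * ‖A f - A f₀‖ ^ 2 / 2 ≤ lagrangian J A g ε f lam := by
  have := lagrangian_two_inv_smul_add_le (A := A) (g := g) (ε := ε) hJ lam f f₀
  have := h₀ ((2 : ℝ)⁻¹ • (f + f₀))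
  linarith

theorem dual_add_le_dual_midpoint (hJ : ConvexOn ℝ Set.univ J) {lam lam' : ℝ}
    (hlam : 0 ≤ lam) (hlam' : 0 ≤ lam') {f₀ f₁ : F}
    (h₀ : ∀ f, lagrangian J A g ε f₀ lam ≤ lagrangian J A g ε f lam)
    (h₁ : ∀ f, lagrangian J A g ε f₁ lam' ≤ lagrangian J A g ε f lam') :
    (dual J A g ε lam + dual J A g ε lam') / 2 + min lam lam' * ‖A f₀ - A f₁‖ ^ 2 / 8 ≤
      dual J A g ε ((lam + lam') / 2) := by
  rw [dual_eq_lagrangian_of_forall_le h₀, dual_eq_lagrangian_of_forall_le h₁]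
  refine le_ciInf fun f => ?_
  have hgrowth₀ := lagrangian_add_le_of_forall_le hJ h₀ f
  have hgrowth₁ := lagrangian_add_le_of_forall_le hJ h₁ f
  have hsplit := norm_sub_sq_le_two_mul_add (A f₀) (A f) (A f₁)
  rw [norm_sub_rev (A f₀) (A f)] at hsplit
  have hmin : min lam lam' * (‖A f - A f₀‖ ^ 2 + ‖A f - A f₁‖ ^ 2) ≤
      lam * ‖A f - A f₀‖ ^ 2 + lam' * ‖A f - A f₁‖ ^ 2 := by
    nlinarith [min_le_left lam lam', min_le_right lam lam', sq_nonneg ‖A f - A f₀‖,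
      sq_nonneg ‖A f - A f₁‖]
  have hmin_nonneg : 0 ≤ min lam lam' := le_min hlam hlam'
  simp only [lagrangian] at hgrowth₀ hgrowth₁ ⊢
  nlinarith

theorem map_eq_map_of_dual_maximizers (hJ : ConvexOn ℝ Set.univ J) {lam lam' : ℝ}
    (hlam : 0 < lam) (hlam' : 0 < lam')
    (hmax : ∀ μ, 0 < μ → dual J A g ε μ ≤ dual J A g ε lam)
    (hmax' : ∀ μ, 0 < μ → dual J A g ε μ ≤ dual J A g ε lam') {f₀ f₁ : F}
    (h₀ : ∀ f, lagrangian J A g ε f₀ lam ≤ lagrangian J A g ε f lam)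
    (h₁ : ∀ f, lagrangian J A g ε f₁ lam' ≤ lagrangian J A g ε f lam') :
    A f₀ = A f₁ := by
  have hμ : 0 < (lam + lam') / 2 := by positivity
  have hgain := dual_add_le_dual_midpoint hJ hlam.le hlam'.le h₀ h₁
  have hsq : min lam lam' * ‖A f₀ - A f₁‖ ^ 2 ≤ 0 := by
    linarith [hmax _ hμ, hmax' _ hμ]
  have hsq' : ‖A f₀ - A f₁‖ ^ 2 ≤ 0 :=
    nonpos_of_mul_nonpos_right (by linarith) (lt_min hlam hlam')
  simpa [sub_eq_zero] using le_antisymm hsq' (sq_nonneg _)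

end InnerProduct

theorem dual_maximizers_same_primal_general
    {F G : Type*} [NormedAddCommGroup F] [InnerProductSpace ℝ F]
    [NormedAddCommGroup G] [InnerProductSpace ℝ G]
    (A : F →L[ℝ] G) (g : G) (ε : ℝ) (J : F → ℝ)
    (hJconv : ConvexOn ℝ Set.univ J)
    (hJstrict : ∀ f f' : F, f ≠ f' → A (f - f') = 0 →
      J ((2 : ℝ)⁻¹ • (f + f')) < (J f + J f') / 2)
    (D : ℝ → ℝ)
    (hD : ∀ lam : ℝ, D lam = ⨅ f : F, (J f + lam * (‖A f - g‖ ^ 2 - ε)))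
    (lam lam' : ℝ) (hlam : 0 < lam) (hlam' : 0 < lam')
    (hmax : ∀ μ : ℝ, 0 < μ → D μ ≤ D lam)
    (hmax' : ∀ μ : ℝ, 0 < μ → D μ ≤ D lam')
    (flam flam' : F)
    (hflam : ∀ f : F,
      J flam + lam * (‖A flam - g‖ ^ 2 - ε) ≤ J f + lam * (‖A f - g‖ ^ 2 - ε))
    (hflam' : ∀ f : F,
      J flam' + lam' * (‖A flam' - g‖ ^ 2 - ε) ≤ J f + lam' * (‖A f - g‖ ^ 2 - ε)) :
    flam = flam' := by
  obtain rfl : D = dual J A g ε := funext hD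
  have hA : A flam = A flam' :=
    map_eq_map_of_dual_maximizers hJconv hlam hlam' hmax hmax' hflam hflam'
  exact eq_of_forall_lagrangian_le_of_map_eq hJstrict hflam hflam' hA

/-- uniqueness part of Theorem `estimation-lambda`. Under Assumption 1
and strict convexity of `J` along `ker A`: if `λ̄ > 0` and `λ̄' > 0` both maximize the
dual function `D` over `(0, ∞)`, then the corresponding unique minimizers of the
Lagrangian coincide: `f_λ̄ = f_λ̄'`. -/
theorem dual_maximizers_same_primal
    {F G : Type*} [NormedAddCommGroup F] [InnerProductSpace ℝ F] [CompleteSpace F]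
    [NormedAddCommGroup G] [InnerProductSpace ℝ G] [CompleteSpace G]
    (A : F →L[ℝ] G) (g : G) (ε : ℝ) (hε : 0 < ε) (J : F → ℝ)
    (hJconv : ConvexOn ℝ Set.univ J)
    (hJlsc : LowerSemicontinuous J)
    (hJcoer : Filter.Tendsto J (Filter.comap (fun f : F => ‖f‖) Filter.atTop) Filter.atTop)
    (hJstrict : ∀ f f' : F, f ≠ f' → A (f - f') = 0 →
      J ((2 : ℝ)⁻¹ • (f + f')) < (J f + J f') / 2)
    (D : ℝ → ℝ)
    (hD : ∀ lam : ℝ, D lam = ⨅ f : F, (J f + lam * (‖A f - g‖ ^ 2 - ε)))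
    (lam lam' : ℝ) (hlam : 0 < lam) (hlam' : 0 < lam')
    (hmax : ∀ μ : ℝ, 0 < μ → D μ ≤ D lam)
    (hmax' : ∀ μ : ℝ, 0 < μ → D μ ≤ D lam')
    (flam flam' : F)
    (hflam : ∀ f : F,
      J flam + lam * (‖A flam - g‖ ^ 2 - ε) ≤ J f + lam * (‖A f - g‖ ^ 2 - ε))
    (hflam' : ∀ f : F,
      J flam' + lam' * (‖A flam' - g‖ ^ 2 - ε) ≤ J f + lam' * (‖A f - g‖ ^ 2 - ε)) :
    flam = flam' :=
  dual_maximizers_same_primal_general A g ε J hJconv hJstrict D hD lam lam' hlam hlam' hmax hmax'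
    flam flam' hflam hflam'
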